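/- For 0 < q < p ≤ 1, n ≥ 1, and x ∈ [0,1], the second central moment of the revised (p,q)-Bernstein operator satisfies B_{n,p,q}((t − x)²; x) = (p^{n−1}/[n]_{p,q})·x(1 − x) ≤ p^{n−1}/(4·[n]_{p,q}). -/

import Mathlib

open Finset

noncomputable def pqInt (p q : ℝ) (m : ℕ) : ℝ := (p ^ m - q ^ m) / (p - q)

noncomputable def pqFact (p q : ℝ) (m : ℕ) : ℝ := ∏ j ∈ Finset.Icc 1 m, pqInt p q j

noncomputable def pqChoose (p q : ℝ) (n k : ℕ) : ℝ :=
  pqFact p q n / (pqFact p q k * pqFact p q (n - k))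

/-- The sample node `[k]_{p,q}/(p^{k-n}[n]_{p,q}) = p^{n-k}[k]_{p,q}/[n]_{p,q}`. -/
noncomputable def pqNode (p q : ℝ) (n k : ℕ) : ℝ :=
  p ^ (n - k) * pqInt p q k / pqInt p q n

/-- Basis function `b_{n,k}(x)` of the revised (p,q)-Bernstein operator. -/
noncomputable def pqBasis (p q : ℝ) (n k : ℕ) (x : ℝ) : ℝ :=
  (p ^ (n * (n - 1) / 2))⁻¹ * pqChoose p q n k * p ^ (k * (k - 1) / 2) * x ^ k *
    ∏ s ∈ Finset.range (n - k), (p ^ s - q ^ s * x)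

/-- The revised (p,q)-Bernstein operator. -/
noncomputable def pqBern (p q : ℝ) (n : ℕ) (f : ℝ → ℝ) (x : ℝ) : ℝ :=
  ∑ k ∈ Finset.range (n + 1), pqBasis p q n k x * f (pqNode p q n k)

/-!
Write `b_{n,k}` for the basis functions and `t_{n,k}` for the nodes. Up to the factor
`p^{n(n-1)/2}`, the `(p,q)`-Pascal rule makes the terms of `∑ₖ b_{n+1,k}` telescope onto
`p^n ∑ₖ b_{n,k}`, so the basis is a partition of unity. From
`[k+1] [n+1 choose k+1] = [n+1] [n choose k]` one gets `b_{n+1,k+1} t_{n+1,k+1} = x b_{n,k}`, and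
`[k+1] = q[k] + p^k` gives `t_{n+1,k+1} = (q[n] t_{n,k} + p^n)/[n+1]`. Hence the first two moments
are `x` and `x (q[n] x + p^n)/[n+1]`, and `q[n] = [n+1] - p^n` turns
`B((t-x)²) = M₂ - 2x M₁ + x²` into `p^n x(1-x)/[n+1]`; finally `x(1-x) ≤ 1/4`.
-/

section PQInteger

variable {p q : ℝ}

lemma pqInt_zero : pqInt p q 0 = 0 := by simp [pqInt]

lemma pqInt_one (hpq : p ≠ q) : pqInt p q 1 = 1 := by
  simp [pqInt, sub_ne_zero.2 hpq]

lemma pqInt_add (hpq : p ≠ q) (a b : ℕ) :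
    pqInt p q (a + b) = p ^ a * pqInt p q b + q ^ b * pqInt p q a := by
  have : p - q ≠ 0 := sub_ne_zero.2 hpq
  unfold pqInt
  field_simp
  ring

lemma pqInt_succ (hpq : p ≠ q) (m : ℕ) : pqInt p q (m + 1) = q * pqInt p q m + p ^ m := by
  rw [pqInt_add hpq, pqInt_one hpq]
  ring

lemma pqInt_pos (hq : 0 ≤ q) (hqp : q < p) {m : ℕ} (hm : m ≠ 0) : 0 < pqInt p q m :=
  div_pos (sub_pos.2 (pow_lt_pow_left₀ hqp hq hm)) (sub_pos.2 hqp)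

lemma pqFact_zero : pqFact p q 0 = 1 := by simp [pqFact]

lemma pqFact_succ (m : ℕ) : pqFact p q (m + 1) = pqFact p q m * pqInt p q (m + 1) :=
  prod_Icc_succ_top (Nat.le_add_left 1 m) _

lemma pqFact_pos (hq : 0 ≤ q) (hqp : q < p) (m : ℕ) : 0 < pqFact p q m :=
  prod_pos fun _ hj => pqInt_pos hq hqp (Nat.one_le_iff_ne_zero.1 (mem_Icc.1 hj).1)

lemma pqChoose_zero_right (hq : 0 ≤ q) (hqp : q < p) (n : ℕ) : pqChoose p q n 0 = 1 := by
  rw [pqChoose, pqFact_zero, Nat.sub_zero, one_mul, div_self (pqFact_pos hq hqp n).ne']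

lemma pqChoose_self (hq : 0 ≤ q) (hqp : q < p) (n : ℕ) : pqChoose p q n n = 1 := by
  rw [pqChoose, Nat.sub_self, pqFact_zero, mul_one, div_self (pqFact_pos hq hqp n).ne']

lemma pqChoose_succ_succ (hq : 0 ≤ q) (hqp : q < p) (a b : ℕ) :
    pqChoose p q (a + b + 2) (a + 1) =
      p ^ (a + 1) * pqChoose p q (a + b + 1) (a + 1) +
        q ^ (b + 1) * pqChoose p q (a + b + 1) a := by
  have hint : pqInt p q (a + b + 2) =
      p ^ (a + 1) * pqInt p q (b + 1) + q ^ (b + 1) * pqInt p q (a + 1) := by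
    rw [show a + b + 2 = (a + 1) + (b + 1) by omega, pqInt_add hqp.ne']
  have ha := (pqFact_pos hq hqp a).ne'
  have hb := (pqFact_pos hq hqp b).ne'
  have ha' := (pqInt_pos hq hqp a.succ_ne_zero).ne'
  have hb' := (pqInt_pos hq hqp b.succ_ne_zero).ne'
  unfold pqChoose
  rw [show a + b + 2 - (a + 1) = b + 1 by omega, show a + b + 1 - (a + 1) = b by omega,
    show a + b + 1 - a = b + 1 by omega, pqFact_succ (a + b + 1), pqFact_succ a, pqFact_succ b,
    hint]
  field_simp

lemma pqChoose_succ_mul (hq : 0 ≤ q) (hqp : q < p) (n k : ℕ) :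
    pqChoose p q (n + 1) (k + 1) * pqInt p q (k + 1) = pqInt p q (n + 1) * pqChoose p q n k := by
  have hn := (pqFact_pos hq hqp n).ne'
  have hk := (pqFact_pos hq hqp k).ne'
  have hnk := (pqFact_pos hq hqp (n - k)).ne'
  have hk' := (pqInt_pos hq hqp k.succ_ne_zero).ne'
  unfold pqChoose
  rw [Nat.add_sub_add_right, pqFact_succ n, pqFact_succ k]
  field_simp

end PQInteger

lemma Finset.sum_range_succ_eq_mul_sum_of_pascal {R : Type*} [CommRing R] {A B c : ℕ → R}
    (a : R) (n : ℕ) (hzero : A 0 = B 0 * (a - c 0)) (htop : A (n + 1) = B n * c n)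
    (hmid : ∀ k < n, A (k + 1) = B (k + 1) * (a - c (k + 1)) + B k * c k) :
    ∑ k ∈ range (n + 2), A k = a * ∑ k ∈ range (n + 1), B k := by
  have hshift : ∑ k ∈ range n, A (k + 1) =
      ∑ k ∈ range n, B (k + 1) * (a - c (k + 1)) + ∑ k ∈ range n, B k * c k := by
    rw [← sum_add_distrib]
    exact sum_congr rfl fun k hk => hmid k (mem_range.1 hk)
  have hsplit : a * ∑ k ∈ range (n + 1), B k =
      ∑ k ∈ range (n + 1), B k * (a - c k) + ∑ k ∈ range (n + 1), B k * c k := by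
    rw [← sum_add_distrib, mul_sum]
    exact sum_congr rfl fun k _ => by ring
  rw [hsplit, sum_range_succ, sum_range_succ', hshift, htop, hzero,
    sum_range_succ' (fun k => B k * (a - c k)), sum_range_succ (fun k => B k * c k)]
  ring

noncomputable def pqTerm (p q : ℝ) (n k : ℕ) (x : ℝ) : ℝ :=
  pqChoose p q n k * p ^ (k * (k - 1) / 2) * x ^ k *
    ∏ s ∈ range (n - k), (p ^ s - q ^ s * x)

section PQBasis

variable {p q : ℝ}

lemma pqBasis_eq_inv_mul_pqTerm (n k : ℕ) (x : ℝ) :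
    pqBasis p q n k x = (p ^ (n * (n - 1) / 2))⁻¹ * pqTerm p q n k x := by
  simp only [pqBasis, pqTerm]
  ring

lemma pqTerm_succ_zero (hq : 0 ≤ q) (hqp : q < p) (n : ℕ) (x : ℝ) :
    pqTerm p q (n + 1) 0 x = pqTerm p q n 0 x * (p ^ n - q ^ n * x) := by
  simp only [pqTerm, pqChoose_zero_right hq hqp, Nat.sub_zero, prod_range_succ]
  ring

lemma pqTerm_succ_self (hq : 0 ≤ q) (hqp : q < p) (n : ℕ) (x : ℝ) :
    pqTerm p q (n + 1) (n + 1) x = pqTerm p q n n x * (p ^ n * x) := by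
  simp only [pqTerm, pqChoose_self hq hqp, Nat.sub_self, prod_range_zero, Nat.triangle_succ]
  ring

lemma pqTerm_succ_succ (hq : 0 ≤ q) (hqp : q < p) {n k : ℕ} (hk : k < n) (x : ℝ) :
    pqTerm p q (n + 1) (k + 1) x =
      pqTerm p q n (k + 1) x * (p ^ n - p ^ (k + 1) * q ^ (n - (k + 1)) * x) +
        pqTerm p q n k x * (p ^ k * q ^ (n - k) * x) := by
  obtain ⟨b, rfl⟩ : ∃ b, n = k + b + 1 := ⟨n - k - 1, by omega⟩
  simp only [pqTerm, show k + b + 1 + 1 = k + b + 2 by omega, pqChoose_succ_succ hq hqp,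
    Nat.triangle_succ, show k + b + 2 - (k + 1) = b + 1 by omega,
    show k + b + 1 - (k + 1) = b by omega, show k + b + 1 - k = b + 1 by omega, prod_range_succ]
  ring

lemma sum_pqTerm (hq : 0 ≤ q) (hqp : q < p) (n : ℕ) (x : ℝ) :
    ∑ k ∈ range (n + 1), pqTerm p q n k x = p ^ (n * (n - 1) / 2) := by
  induction n with
  | zero => simp [pqTerm, pqChoose_self hq hqp]
  | succ n ih =>
    rw [sum_range_succ_eq_mul_sum_of_pascal (p ^ n) n (B := fun k => pqTerm p q n k x)
      (c := fun k => p ^ k * q ^ (n - k) * x) (by simpa using pqTerm_succ_zero hq hqp n x)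
      (by simpa using pqTerm_succ_self hq hqp n x)
      (fun k hk => pqTerm_succ_succ hq hqp hk x), ih, Nat.triangle_succ, pow_add, mul_comm]

lemma sum_pqBasis (hq : 0 ≤ q) (hqp : q < p) (n : ℕ) (x : ℝ) :
    ∑ k ∈ range (n + 1), pqBasis p q n k x = 1 := by
  simp only [pqBasis_eq_inv_mul_pqTerm, ← mul_sum, sum_pqTerm hq hqp]
  exact inv_mul_cancel₀ (pow_ne_zero _ (hq.trans_lt hqp).ne')

end PQBasis

section Moments

variable {p q : ℝ}

lemma pqNode_zero_right (n : ℕ) : pqNode p q n 0 = 0 := by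
  simp [pqNode, pqInt_zero]

lemma pqBasis_succ_mul_pqNode (hq : 0 ≤ q) (hqp : q < p) {n j : ℕ} (hj : j ≤ n) (x : ℝ) :
    pqBasis p q (n + 1) (j + 1) x * pqNode p q (n + 1) (j + 1) = x * pqBasis p q n j x := by
  have hn := (pqInt_pos hq hqp n.succ_ne_zero).ne'
  have hj' := (pqInt_pos hq hqp j.succ_ne_zero).ne'
  have hp := (hq.trans_lt hqp).ne'
  have hchoose : pqChoose p q (n + 1) (j + 1) =
      pqInt p q (n + 1) * pqChoose p q n j / pqInt p q (j + 1) :=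
    eq_div_of_mul_eq hj' (pqChoose_succ_mul hq hqp n j)
  have hpow : p ^ (n * (n - 1) / 2 + n) = p ^ (n * (n - 1) / 2) * (p ^ (n - j) * p ^ j) := by
    rw [← pow_add, ← pow_add, Nat.sub_add_cancel hj]
  unfold pqBasis pqNode
  rw [Nat.triangle_succ, Nat.triangle_succ, Nat.add_sub_add_right, hchoose, hpow, pow_add,
    pow_succ]
  field_simp

lemma pqNode_succ_succ (hq : 0 ≤ q) (hqp : q < p) {n j : ℕ} (hj : j ≤ n) :
    pqNode p q (n + 1) (j + 1) =
      q * pqInt p q n / pqInt p q (n + 1) * pqNode p q n j + p ^ n / pqInt p q (n + 1) := by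
  rcases n.eq_zero_or_pos with rfl | hn
  · obtain rfl : j = 0 := Nat.le_zero.1 hj
    simp [pqNode, pqInt_zero, pqInt_one hqp.ne']
  have hn0 := (pqInt_pos hq hqp hn.ne').ne'
  have hn1 := (pqInt_pos hq hqp n.succ_ne_zero).ne'
  have hpow : p ^ (n - j) * p ^ j = p ^ n := by rw [← pow_add, Nat.sub_add_cancel hj]
  unfold pqNode
  rw [Nat.add_sub_add_right, pqInt_succ hqp.ne' j, ← hpow]
  field_simp

lemma sum_pqBasis_succ_mul_pqNode (hq : 0 ≤ q) (hqp : q < p) (n : ℕ) (x : ℝ) :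
    ∑ k ∈ range (n + 2), pqBasis p q (n + 1) k x * pqNode p q (n + 1) k = x := by
  rw [sum_range_succ', pqNode_zero_right, mul_zero, add_zero,
    sum_congr rfl fun j hj => pqBasis_succ_mul_pqNode hq hqp (Nat.lt_succ_iff.1 (mem_range.1 hj)) x,
    ← mul_sum, sum_pqBasis hq hqp, mul_one]

lemma sum_pqBasis_succ_mul_pqNode_sq (hq : 0 ≤ q) (hqp : q < p) (n : ℕ) (x : ℝ) :
    ∑ k ∈ range (n + 2), pqBasis p q (n + 1) k x * pqNode p q (n + 1) k ^ 2 =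
      x * (q * pqInt p q n / pqInt p q (n + 1) * x + p ^ n / pqInt p q (n + 1)) := by
  set a := q * pqInt p q n / pqInt p q (n + 1)
  set b := p ^ n / pqInt p q (n + 1)
  have hterm : ∀ j ∈ range (n + 1),
      pqBasis p q (n + 1) (j + 1) x * pqNode p q (n + 1) (j + 1) ^ 2 =
        a * x * (pqBasis p q n j x * pqNode p q n j) + b * x * pqBasis p q n j x := by
    intro j hj
    have hjn := Nat.lt_succ_iff.1 (mem_range.1 hj)
    rw [sq, ← mul_assoc, pqBasis_succ_mul_pqNode hq hqp hjn, pqNode_succ_succ hq hqp hjn]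
    ring
  have hfirst : a * ∑ j ∈ range (n + 1), pqBasis p q n j x * pqNode p q n j = a * x := by
    rcases n with _ | m
    · simp [a, pqInt_zero]
    · rw [sum_pqBasis_succ_mul_pqNode hq hqp]
  rw [sum_range_succ', pqNode_zero_right, sq, mul_zero, mul_zero, add_zero, sum_congr rfl hterm,
    sum_add_distrib, ← mul_sum, ← mul_sum, sum_pqBasis hq hqp]
  linear_combination x * hfirst

end Moments

lemma pqBern_sub_sq_eq_moments (p q : ℝ) (n : ℕ) (x : ℝ) :
    pqBern p q n (fun t => (t - x) ^ 2) x =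
      ∑ k ∈ range (n + 1), pqBasis p q n k x * pqNode p q n k ^ 2 -
        2 * x * ∑ k ∈ range (n + 1), pqBasis p q n k x * pqNode p q n k +
          x ^ 2 * ∑ k ∈ range (n + 1), pqBasis p q n k x := by
  simp only [pqBern, mul_sum, ← sum_sub_distrib, ← sum_add_distrib]
  exact sum_congr rfl fun _ _ => by ring

lemma pqBern_succ_sub_sq {p q : ℝ} (hq : 0 ≤ q) (hqp : q < p) (n : ℕ) (x : ℝ) :
    pqBern p q (n + 1) (fun t => (t - x) ^ 2) x = p ^ n / pqInt p q (n + 1) * x * (1 - x) := by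
  have hn1 : pqInt p q (n + 1) ≠ 0 := (pqInt_pos hq hqp n.succ_ne_zero).ne'
  rw [pqBern_sub_sq_eq_moments, sum_pqBasis_succ_mul_pqNode_sq hq hqp,
    sum_pqBasis_succ_mul_pqNode hq hqp, sum_pqBasis hq hqp]
  have hsucc := pqInt_succ hqp.ne' n
  field_simp
  linear_combination (-x ^ 2) * hsucc

theorem pqBern_central_moment_general (p q : ℝ) (n : ℕ) (hn : 1 ≤ n)
    (hq : 0 < q) (hqp : q < p) (x : ℝ) :
    pqBern p q n (fun t => (t - x) ^ 2) x = (p ^ (n - 1) / pqInt p q n) * x * (1 - x) ∧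
      pqBern p q n (fun t => (t - x) ^ 2) x ≤ p ^ (n - 1) / (4 * pqInt p q n) := by
  obtain ⟨m, rfl⟩ := Nat.exists_eq_add_of_le' hn
  have hmoment := pqBern_succ_sub_sq hq.le hqp m x
  refine ⟨hmoment, ?_⟩
  have hcoeff : 0 ≤ p ^ m / pqInt p q (m + 1) :=
    div_nonneg (pow_nonneg (hq.trans hqp).le m) (pqInt_pos hq.le hqp m.succ_ne_zero).le
  have hquarter : x * (1 - x) ≤ 1 / 4 := by nlinarith [four_mul_le_sq_add x (1 - x)]
  calc pqBern p q (m + 1) (fun t => (t - x) ^ 2) x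
      = p ^ m / pqInt p q (m + 1) * (x * (1 - x)) := by rw [hmoment, mul_assoc]
    _ ≤ p ^ m / pqInt p q (m + 1) * (1 / 4) := mul_le_mul_of_nonneg_left hquarter hcoeff
    _ = p ^ (m + 1 - 1) / (4 * pqInt p q (m + 1)) := by rw [Nat.add_sub_cancel]; ring

theorem pqBern_central_moment (p q : ℝ) (n : ℕ) (hn : 1 ≤ n)
    (hq : 0 < q) (hqp : q < p) (hp : p ≤ 1) (x : ℝ) (hx : x ∈ Set.Icc (0:ℝ) 1) :
    pqBern p q n (fun t => (t - x) ^ 2) x = (p ^ (n - 1) / pqInt p q n) * x * (1 - x) ∧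
      pqBern p q n (fun t => (t - x) ^ 2) x ≤ p ^ (n - 1) / (4 * pqInt p q n) :=
  pqBern_central_moment_general p q n hn hq hqp x
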